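/- Fix q ∈ ℝ and x, y ∈ ℝⁿ. There exist reals T₀, C ∈ (0,∞), depending on q, x, y, such that for every T ≥ T₀ one has S^{xy}_T(q) ≤ C·T. -/

import Mathlib

/-!
Since `b` is not a gradient, some triangle `x → x + z → x + z + h → x` has nonzero circulation
`K` of `b`: if every triangle had circulation zero, `w ↦ ∫ b` along the segment `[x, w]` would be
a potential. A path that runs `l` times around this triangle during time `T - 1` and then straight
to `y` in unit time picks up a work `W(l)` with `W` continuous and `W(l + 1) = W(l) + K`, so the
intermediate value theorem yields `l = O(T)` with `W(l) = qT/2`, i.e. `L_T = q`. Position and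
velocity of this path are bounded independently of `T`, hence its action is `O(T)`.
-/

open MeasureTheory Filter Real Set
open scoped InnerProductSpace

noncomputable section

/-- Euclidean space ℝⁿ. -/
abbrev Euc (n : ℕ) := EuclideanSpace ℝ (Fin n)

/-- `InHT n T x φ φ'` : `φ : [0,T] → ℝⁿ` is an absolutely continuous path starting at `x`,
with (a.e.) derivative `φ'` which is square integrable on `[0,T]`. -/
def InHT (n : ℕ) (T : ℝ) (x : Euc n) (φ φ' : ℝ → Euc n) : Prop :=
  φ 0 = x ∧
  IntervalIntegrable φ' volume 0 T ∧
  IntervalIntegrable (fun t => ‖φ' t‖ ^ 2) volume 0 T ∧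
  ∀ t ∈ Set.Icc (0 : ℝ) T, φ t = x + ∫ s in (0 : ℝ)..t, φ' s

/-- Freidlin–Wentzell action functional `I^x_T`. -/
def FW (n : ℕ) (c : Euc n → Euc n) (T : ℝ) (φ φ' : ℝ → Euc n) : ℝ :=
  (1 / 2) * ∫ t in (0 : ℝ)..T, ‖φ' t - c (φ t)‖ ^ 2

/-- Power dissipated by the vector field `b` along the path, `L_T`. -/
def Diss (n : ℕ) (b : Euc n → Euc n) (T : ℝ) (φ φ' : ℝ → Euc n) : ℝ :=
  (2 / T) * ∫ t in (0 : ℝ)..T, ⟪b (φ t), φ' t⟫_ℝ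

/-- `S^{xy}_T(q)`, infimum of the action over paths from `x` to `y` dissipating power `q`. -/
def Sxy (n : ℕ) (b c : Euc n → Euc n) (T : ℝ) (x y : Euc n) (q : ℝ) : ℝ :=
  sInf { r : ℝ | ∃ φ φ' : ℝ → Euc n,
    InHT n T x φ φ' ∧ φ T = y ∧ Diss n b T φ φ' = q ∧ FW n c T φ φ' = r }

/-- `S^{x}_T(q)`, infimum of the action over paths from `x` with free endpoint. -/
def Sx (n : ℕ) (b c : Euc n → Euc n) (T : ℝ) (x : Euc n) (q : ℝ) : ℝ :=
  sInf { r : ℝ | ∃ φ φ' : ℝ → Euc n,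
    InHT n T x φ φ' ∧ Diss n b T φ φ' = q ∧ FW n c T φ φ' = r }

/-- `s^x(q) = inf_{T>0} S^{xx}_T(q)/T`. -/
def sfun (n : ℕ) (b c : Euc n → Euc n) (x : Euc n) (q : ℝ) : ℝ :=
  sInf { r : ℝ | ∃ T : ℝ, 0 < T ∧ r = Sxy n b c T x x q / T }

/-- Assumption (A). -/
def AssumptionA (n : ℕ) (V : Euc n → ℝ) : Prop :=
  ContDiff ℝ 2 V ∧
  Tendsto (fun x : Euc n => ⟪gradient V x, x⟫_ℝ / ‖x‖) (cocompact (Euc n)) atTop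

/-- Assumption (B): `b` is `C¹`, bounded with bounded derivative and not conservative. -/
def AssumptionB (n : ℕ) (b : Euc n → Euc n) : Prop :=
  ContDiff ℝ 1 b ∧
  (∃ M : ℝ, ∀ x, ‖b x‖ ≤ M) ∧
  (∃ M : ℝ, ∀ x, ‖fderiv ℝ b x‖ ≤ M) ∧
  ¬ ∃ F : Euc n → ℝ, Differentiable ℝ F ∧ ∀ x, gradient F x = b x

theorem intervalIntegrable_of_norm_le {E : Type*} [NormedAddCommGroup E] {f : ℝ → E} {C : ℝ}
    (hf : AEStronglyMeasurable f) (hC : ∀ t, ‖f t‖ ≤ C) (a c : ℝ) :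
    IntervalIntegrable f volume a c :=
  (intervalIntegrable_const (c := C)).mono_fun' hf.restrict (ae_of_all _ hC)

theorem exists_eq_and_abs_le_of_add_one {f : ℝ → ℝ} {K : ℝ} (hf : Continuous f) (hK : K ≠ 0)
    (hadd : ∀ l, f (l + 1) = f l + K) (τ : ℝ) :
    ∃ l, f l = τ ∧ |l| ≤ (|τ| + |f 0|) / |K| + 1 := by
  have hper : Function.Periodic (fun l => f l - K * l) 1 := fun l => by
    simp only [hadd]; ring
  have hint : ∀ m : ℤ, f m = f 0 + m * K := fun m => by
    have := hper.int_mul_eq m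
    simp only [mul_one, mul_zero, sub_zero] at this
    linarith
  set N : ℕ := ⌈(|τ| + |f 0|) / |K|⌉₊
  have hKpos : 0 < |K| := abs_pos.2 hK
  have hN : |τ - f 0| ≤ N * |K| :=
    (abs_sub _ _).trans ((div_le_iff₀ hKpos).1 (Nat.le_ceil _))
  have hτ : τ ∈ uIcc (f (-N)) (f N) := by
    have hpos := hint N
    have hneg := hint (-N)
    push_cast at hpos hneg
    rw [abs_le] at hN
    rcases le_total 0 K with h0 | h0
    · rw [abs_of_nonneg h0] at hN
      exact mem_uIcc.2 (Or.inl ⟨by nlinarith, by nlinarith⟩)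
    · rw [abs_of_nonpos h0] at hN
      exact mem_uIcc.2 (Or.inr ⟨by nlinarith, by nlinarith⟩)
  obtain ⟨l, hl, hfl⟩ := intermediate_value_uIcc hf.continuousOn hτ
  refine ⟨l, hfl, (abs_le.2 ?_).trans (Nat.ceil_lt_add_one (by positivity)).le⟩
  rw [uIcc_of_le (by simp)] at hl
  exact ⟨hl.1, hl.2⟩

section SegmentWork

variable {E : Type*} [NormedAddCommGroup E] [InnerProductSpace ℝ E] {b : E → E}

def segmentWork (b : E → E) (p w : E) : ℝ := ∫ t in (0 : ℝ)..1, ⟪b (p + t • w), w⟫_ℝ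

theorem segmentWork_reverse (b : E → E) (p w : E) :
    segmentWork b (p + w) (-w) = -segmentWork b p w := by
  have hpt : ∀ t : ℝ, p + w + t • -w = p + (1 - t) • w := fun t => by module
  simp only [segmentWork, inner_neg_right, intervalIntegral.integral_neg, hpt]
  rw [intervalIntegral.integral_comp_sub_left (fun t => ⟪b (p + t • w), w⟫_ℝ) 1]
  norm_num

theorem continuous_segmentWork (hb : Continuous b) :
    Continuous fun pw : E × E => segmentWork b pw.1 pw.2 :=
  intervalIntegral.continuous_parametric_intervalIntegral_of_continuous' (by fun_prop) 0 1

theorem integral_inner_eq_segmentWork {φ φ' : ℝ → E} {a c k : ℝ} {p w : E} (hac : a ≤ c)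
    (hk : k * (c - a) = 1) (hφ : ∀ s ∈ Ioo a c, φ s = p + (k * (s - a)) • w)
    (hφ' : ∀ s ∈ Ioo a c, φ' s = k • w) :
    ∫ s in a..c, ⟪b (φ s), φ' s⟫_ℝ = segmentWork b p w := by
  rw [intervalIntegral.integral_congr_Ioo_of_le hac
    (g := fun s => k * ⟪b (p + (k * s - k * a) • w), w⟫_ℝ) fun s hs => by
      simp only [hφ s hs, hφ' s hs, real_inner_smul_right, mul_sub]]
  have hsub := intervalIntegral.mul_integral_comp_mul_sub (a := a) (b := c) (c := k) (d := k * a)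
    (f := fun t => ⟪b (p + t • w), w⟫_ℝ)
  rw [sub_self, ← mul_sub, hk] at hsub
  rw [intervalIntegral.integral_const_mul]
  exact hsub

theorem hasGradientAt_of_sub_eq_segmentWork [CompleteSpace E] (hb : Continuous b) {F : E → ℝ}
    (hF : ∀ p w, F w - F p = segmentWork b p (w - p)) (p : E) : HasGradientAt F (b p) p := by
  rw [hasGradientAt_iff_isLittleO, Asymptotics.isLittleO_iff]
  intro ε hε
  obtain ⟨δ, hδ, hbδ⟩ := Metric.continuous_iff.1 hb p ε hε
  filter_upwards [Metric.ball_mem_nhds p hδ] with w hw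
  have hcont : Continuous fun t : ℝ => ⟪b (p + t • (w - p)), w - p⟫_ℝ := by fun_prop
  have hsplit : F w - F p - ⟪b p, w - p⟫_ℝ
      = ∫ t in (0 : ℝ)..1, ⟪b (p + t • (w - p)) - b p, w - p⟫_ℝ := by
    simp only [hF, segmentWork, inner_sub_left]
    rw [intervalIntegral.integral_sub (hcont.intervalIntegrable 0 1) intervalIntegrable_const]
    simp
  have hclose : ∀ t ∈ uIoc (0 : ℝ) 1, ‖⟪b (p + t • (w - p)) - b p, w - p⟫_ℝ‖ ≤ ε * ‖w - p‖ := by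
    intro t ht
    rw [uIoc_of_le zero_le_one] at ht
    refine (norm_inner_le_norm _ _).trans (mul_le_mul_of_nonneg_right ?_ (norm_nonneg _))
    rw [← dist_eq_norm]
    refine (hbδ _ ?_).le
    rw [dist_eq_norm, add_sub_cancel_left, norm_smul, Real.norm_of_nonneg ht.1.le]
    exact (mul_le_of_le_one_left (norm_nonneg _) ht.2).trans_lt (mem_ball_iff_norm.1 hw)
  rw [hsplit]
  simpa using intervalIntegral.norm_integral_le_of_norm_le_const hclose

def triangleCirculation (b : E → E) (p z h : E) : ℝ :=
  segmentWork b p z + segmentWork b (p + z) h + segmentWork b (p + z + h) (-(z + h))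

theorem exists_triangleCirculation_ne_zero [CompleteSpace E] (hb : Continuous b)
    (hnc : ¬∃ F : E → ℝ, Differentiable ℝ F ∧ ∀ x, gradient F x = b x) (p : E) :
    ∃ z h, triangleCirculation b p z h ≠ 0 := by
  by_contra! hzero
  set F : E → ℝ := fun w => segmentWork b p (w - p)
  have hF : ∀ u w, F w - F u = segmentWork b u (w - u) := by
    intro u w
    have htri := hzero (u - p) (w - u)
    have hrev := segmentWork_reverse b p (w - p)
    simp only [triangleCirculation, add_sub_cancel, show -(u - p + (w - u)) = -(w - p) by abel]
      at htri hrev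
    simp only [F]
    linarith
  exact hnc ⟨F, fun u => (hasGradientAt_of_sub_eq_segmentWork hb hF u).differentiableAt,
    fun u => (hasGradientAt_of_sub_eq_segmentWork hb hF u).gradient⟩

end SegmentWork

section TriangleLoop

variable {E : Type*} [NormedAddCommGroup E] [InnerProductSpace ℝ E] (z h : E)

def triangleVelocity (s : ℝ) : E :=
  if Int.fract s < 1 / 3 then (3 : ℝ) • z
  else if Int.fract s < 2 / 3 then (3 : ℝ) • h else (3 : ℝ) • -(z + h)

def triangleLoop (u : ℝ) : E := ∫ s in (0 : ℝ)..u, triangleVelocity z h s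

theorem triangleVelocity_periodic : Function.Periodic (triangleVelocity z h) 1 := fun s => by
  simp only [triangleVelocity, Int.fract_add_one]

theorem stronglyMeasurable_triangleVelocity : StronglyMeasurable (triangleVelocity z h) :=
  .ite (measurable_fract measurableSet_Iio) stronglyMeasurable_const
    (.ite (measurable_fract measurableSet_Iio) stronglyMeasurable_const stronglyMeasurable_const)

theorem norm_triangleVelocity_le (s : ℝ) : ‖triangleVelocity z h s‖ ≤ 3 * (‖z‖ + ‖h‖) := by
  have hz := norm_nonneg z
  have hh := norm_nonneg h
  have hzh := norm_add_le z h
  unfold triangleVelocity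
  split_ifs <;> simp only [norm_smul, norm_neg, Real.norm_ofNat] <;> linarith

theorem intervalIntegrable_triangleVelocity (a c : ℝ) :
    IntervalIntegrable (triangleVelocity z h) volume a c :=
  intervalIntegrable_of_norm_le (stronglyMeasurable_triangleVelocity z h).aestronglyMeasurable
    (norm_triangleVelocity_le z h) a c

theorem continuous_triangleLoop : Continuous (triangleLoop z h) :=
  intervalIntegral.continuous_primitive (intervalIntegrable_triangleVelocity z h) 0

theorem triangleLoop_add (a c : ℝ) :
    triangleLoop z h c = triangleLoop z h a + ∫ s in a..c, triangleVelocity z h s :=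
  (intervalIntegral.integral_add_adjacent_intervals
    (intervalIntegrable_triangleVelocity z h 0 a)
    (intervalIntegrable_triangleVelocity z h a c)).symm

theorem triangleVelocity_of_mem_Ioo_first {s : ℝ} (hs : s ∈ Ioo 0 (1 / 3)) :
    triangleVelocity z h s = (3 : ℝ) • z := by
  rw [triangleVelocity, Int.fract_eq_self.2 ⟨hs.1.le, by linarith [hs.2]⟩, if_pos hs.2]

theorem triangleVelocity_of_mem_Ioo_second {s : ℝ} (hs : s ∈ Ioo (1 / 3) (2 / 3)) :
    triangleVelocity z h s = (3 : ℝ) • h := by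
  rw [triangleVelocity, Int.fract_eq_self.2 ⟨by linarith [hs.1], by linarith [hs.2]⟩,
    if_neg (not_lt.2 hs.1.le), if_pos hs.2]

theorem triangleVelocity_of_mem_Ioo_third {s : ℝ} (hs : s ∈ Ioo (2 / 3) 1) :
    triangleVelocity z h s = (3 : ℝ) • -(z + h) := by
  rw [triangleVelocity, Int.fract_eq_self.2 ⟨by linarith [hs.1], hs.2⟩,
    if_neg (by linarith [hs.1]), if_neg (not_lt.2 hs.1.le)]

theorem triangleLoop_of_mem_Icc_first [CompleteSpace E] {u : ℝ} (hu : u ∈ Icc 0 (1 / 3)) :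
    triangleLoop z h u = (3 * u) • z := by
  rw [triangleLoop, intervalIntegral.integral_congr_Ioo_of_le hu.1 (g := fun _ => (3 : ℝ) • z)
    fun s hs => triangleVelocity_of_mem_Ioo_first z h ⟨hs.1, hs.2.trans_le hu.2⟩,
    intervalIntegral.integral_const]
  module

theorem triangleLoop_of_mem_Icc_second [CompleteSpace E] {u : ℝ} (hu : u ∈ Icc (1 / 3) (2 / 3)) :
    triangleLoop z h u = z + (3 * u - 1) • h := by
  rw [triangleLoop_add z h (1 / 3), triangleLoop_of_mem_Icc_first z h (by norm_num),
    intervalIntegral.integral_congr_Ioo_of_le hu.1 (g := fun _ => (3 : ℝ) • h)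
    fun s hs => triangleVelocity_of_mem_Ioo_second z h ⟨hs.1, hs.2.trans_le hu.2⟩,
    intervalIntegral.integral_const]
  module

theorem triangleLoop_of_mem_Icc_third [CompleteSpace E] {u : ℝ} (hu : u ∈ Icc (2 / 3) 1) :
    triangleLoop z h u = z + h + (3 * u - 2) • -(z + h) := by
  rw [triangleLoop_add z h (2 / 3), triangleLoop_of_mem_Icc_second z h (by norm_num),
    intervalIntegral.integral_congr_Ioo_of_le hu.1 (g := fun _ => (3 : ℝ) • -(z + h))
    fun s hs => triangleVelocity_of_mem_Ioo_third z h ⟨hs.1, hs.2.trans_le hu.2⟩,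
    intervalIntegral.integral_const]
  module

theorem triangleLoop_periodic [CompleteSpace E] :
    Function.Periodic (triangleLoop z h) 1 := fun u => by
  have hone : triangleLoop z h 1 = 0 := by
    rw [triangleLoop_of_mem_Icc_third z h (by norm_num)]
    module
  rw [triangleLoop, (triangleVelocity_periodic z h).intervalIntegral_add_eq_add 0 u
    (intervalIntegrable_triangleVelocity z h), zero_add]
  exact add_eq_left.2 hone

theorem norm_triangleLoop_le [CompleteSpace E] (u : ℝ) :
    ‖triangleLoop z h u‖ ≤ 3 * (‖z‖ + ‖h‖) := by
  rw [← (triangleLoop_periodic z h).sub_int_mul_eq ⌊u⌋, mul_one, Int.self_sub_floor]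
  refine (intervalIntegral.norm_integral_le_of_norm_le_const
    fun s _ => norm_triangleVelocity_le z h s).trans ?_
  rw [sub_zero, abs_of_nonneg (Int.fract_nonneg u)]
  exact mul_le_of_le_one_right (by positivity) (Int.fract_lt_one u).le

end TriangleLoop

section Winding

variable {E : Type*} [NormedAddCommGroup E] [InnerProductSpace ℝ E] {b : E → E} {Mb : ℝ}

theorem intervalIntegrable_inner_comp {φ φ' : ℝ → E} {B : ℝ} (hb : Continuous b)
    (hMb : ∀ w, ‖b w‖ ≤ Mb) (hφ : Continuous φ) (hφ' : AEStronglyMeasurable φ')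
    (hB : ∀ t, ‖φ' t‖ ≤ B) (a c : ℝ) :
    IntervalIntegrable (fun t => ⟪b (φ t), φ' t⟫_ℝ) volume a c :=
  intervalIntegrable_of_norm_le ((hb.comp hφ).aestronglyMeasurable.inner hφ')
    (fun t => (norm_inner_le_norm _ _).trans
      (mul_le_mul (hMb _) (hB t) (norm_nonneg _) ((norm_nonneg _).trans (hMb 0)))) a c

theorem intervalIntegrable_inner_triangleVelocity (hb : Continuous b) (hMb : ∀ w, ‖b w‖ ≤ Mb)
    (p z h : E) (a c : ℝ) :
    IntervalIntegrable (fun u => ⟪b (p + triangleLoop z h u), triangleVelocity z h u⟫_ℝ)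
      volume a c :=
  intervalIntegrable_inner_comp hb hMb (continuous_const.add (continuous_triangleLoop z h))
    (stronglyMeasurable_triangleVelocity z h).aestronglyMeasurable (norm_triangleVelocity_le z h)
    a c

theorem integral_inner_triangleVelocity_eq_triangleCirculation [CompleteSpace E]
    (hb : Continuous b) (hMb : ∀ w, ‖b w‖ ≤ Mb) (p z h : E) :
    ∫ u in (0 : ℝ)..1, ⟪b (p + triangleLoop z h u), triangleVelocity z h u⟫_ℝ
      = triangleCirculation b p z h := by
  have hint := intervalIntegrable_inner_triangleVelocity hb hMb p z h
  rw [← intervalIntegral.integral_add_adjacent_intervals (hint 0 (2 / 3)) (hint (2 / 3) 1),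
    ← intervalIntegral.integral_add_adjacent_intervals (hint 0 (1 / 3)) (hint (1 / 3) (2 / 3)),
    triangleCirculation]
  congr 1
  congr 1
  · refine integral_inner_eq_segmentWork (k := 3) (by norm_num) (by norm_num) (fun s hs => ?_)
      fun s hs => triangleVelocity_of_mem_Ioo_first z h hs
    rw [triangleLoop_of_mem_Icc_first z h (Ioo_subset_Icc_self hs), sub_zero]
  · refine integral_inner_eq_segmentWork (k := 3) (by norm_num) (by norm_num) (fun s hs => ?_)
      fun s hs => triangleVelocity_of_mem_Ioo_second z h hs
    rw [triangleLoop_of_mem_Icc_second z h (Ioo_subset_Icc_self hs)]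
    module
  · refine integral_inner_eq_segmentWork (k := 3) (by norm_num) (by norm_num) (fun s hs => ?_)
      fun s hs => triangleVelocity_of_mem_Ioo_third z h hs
    rw [triangleLoop_of_mem_Icc_third z h (Ioo_subset_Icc_self hs)]
    module

variable (b) (x y z h : E)

def windingWork (l : ℝ) : ℝ :=
  (∫ u in (0 : ℝ)..l, ⟪b (x + triangleLoop z h u), triangleVelocity z h u⟫_ℝ)
    + segmentWork b (x + triangleLoop z h l) (y - (x + triangleLoop z h l))

theorem continuous_windingWork (hb : Continuous b) (hMb : ∀ w, ‖b w‖ ≤ Mb) :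
    Continuous (windingWork b x y z h) :=
  (intervalIntegral.continuous_primitive
    (intervalIntegrable_inner_triangleVelocity hb hMb x z h) 0).add
    ((continuous_segmentWork hb).comp ((continuous_const.add (continuous_triangleLoop z h)).prodMk
      (continuous_const.sub (continuous_const.add (continuous_triangleLoop z h)))))

theorem windingWork_add_one [CompleteSpace E] (hb : Continuous b) (hMb : ∀ w, ‖b w‖ ≤ Mb) (l : ℝ) :
    windingWork b x y z h (l + 1) = windingWork b x y z h l + triangleCirculation b x z h := by
  have hper : Function.Periodic
      (fun u => ⟪b (x + triangleLoop z h u), triangleVelocity z h u⟫_ℝ) 1 := fun u => by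
    simp only [triangleLoop_periodic z h u, triangleVelocity_periodic z h u]
  rw [windingWork, windingWork, triangleLoop_periodic z h l,
    hper.intervalIntegral_add_eq_add 0 l (intervalIntegrable_inner_triangleVelocity hb hMb x z h),
    zero_add, integral_inner_triangleVelocity_eq_triangleCirculation hb hMb]
  ring

variable (T l : ℝ)

def windingVelocity (t : ℝ) : E :=
  if t < T - 1 then (l / (T - 1)) • triangleVelocity z h (l / (T - 1) * t)
  else y - (x + triangleLoop z h l)

def windingPath (t : ℝ) : E := x + ∫ s in (0 : ℝ)..t, windingVelocity x y z h T l s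

theorem stronglyMeasurable_windingVelocity : StronglyMeasurable (windingVelocity x y z h T l) :=
  .ite measurableSet_Iio (((stronglyMeasurable_triangleVelocity z h).comp_measurable
    (measurable_const_mul _)).const_smul _) stronglyMeasurable_const

theorem norm_windingVelocity_le [CompleteSpace E] (t : ℝ) :
    ‖windingVelocity x y z h T l t‖
      ≤ (|l / (T - 1)| + 1) * (‖x‖ + ‖y‖ + 3 * (‖z‖ + ‖h‖)) := by
  have hx := norm_nonneg x
  have hy := norm_nonneg y
  have hloop := norm_triangleLoop_le z h l
  have hvel := norm_triangleVelocity_le z h (l / (T - 1) * t)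
  have hslope := abs_nonneg (l / (T - 1))
  have hβ : 3 * (‖z‖ + ‖h‖) ≤ ‖x‖ + ‖y‖ + 3 * (‖z‖ + ‖h‖) := by linarith
  have hβ0 : 0 ≤ ‖x‖ + ‖y‖ + 3 * (‖z‖ + ‖h‖) := by positivity
  rw [add_one_mul]
  unfold windingVelocity
  split_ifs
  · rw [norm_smul, Real.norm_eq_abs]
    nlinarith [mul_le_mul_of_nonneg_left (hvel.trans hβ) hslope]
  · have := norm_sub_le y (x + triangleLoop z h l)
    have := norm_add_le x (triangleLoop z h l)
    nlinarith [mul_nonneg hslope hβ0]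

theorem intervalIntegrable_windingVelocity [CompleteSpace E] (a c : ℝ) :
    IntervalIntegrable (windingVelocity x y z h T l) volume a c :=
  intervalIntegrable_of_norm_le
    (stronglyMeasurable_windingVelocity x y z h T l).aestronglyMeasurable
    (norm_windingVelocity_le x y z h T l) a c

theorem continuous_windingPath [CompleteSpace E] : Continuous (windingPath x y z h T l) :=
  continuous_const.add
    (intervalIntegral.continuous_primitive (intervalIntegrable_windingVelocity x y z h T l) 0)

theorem windingPath_of_mem_Icc [CompleteSpace E] {t : ℝ} (ht : t ∈ Icc 0 (T - 1)) :
    windingPath x y z h T l t = x + triangleLoop z h (l / (T - 1) * t) := by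
  rw [windingPath, intervalIntegral.integral_congr_Ioo_of_le ht.1
    (f := windingVelocity x y z h T l)
    (g := fun s => (l / (T - 1)) • triangleVelocity z h (l / (T - 1) * s))
    fun s hs => if_pos (hs.2.trans_le ht.2), intervalIntegral.integral_smul,
    intervalIntegral.smul_integral_comp_mul_left (triangleVelocity z h), mul_zero, triangleLoop]

theorem windingPath_of_le [CompleteSpace E] (hT : 1 < T) {t : ℝ} (ht : T - 1 ≤ t) :
    windingPath x y z h T l t
      = x + triangleLoop z h l + (t - (T - 1)) • (y - (x + triangleLoop z h l)) := by
  have hstart := windingPath_of_mem_Icc x y z h T l ⟨by linarith, le_rfl⟩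
  rw [div_mul_cancel₀ l (by linarith : T - 1 ≠ 0)] at hstart
  rw [windingPath, ← intervalIntegral.integral_add_adjacent_intervals
    (intervalIntegrable_windingVelocity x y z h T l 0 (T - 1))
    (intervalIntegrable_windingVelocity x y z h T l (T - 1) t), ← add_assoc, ← windingPath,
    hstart, intervalIntegral.integral_congr_Ioo_of_le ht (f := windingVelocity x y z h T l)
    (g := fun _ => y - (x + triangleLoop z h l)) fun s hs => if_neg (not_lt.2 hs.1.le),
    intervalIntegral.integral_const]

theorem windingPath_end [CompleteSpace E] (hT : 1 < T) : windingPath x y z h T l T = y := by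
  rw [windingPath_of_le x y z h T l hT (by linarith), sub_sub_cancel, one_smul,
    add_sub_cancel]

theorem integral_inner_windingVelocity_eq_windingWork [CompleteSpace E] (hb : Continuous b)
    (hMb : ∀ w, ‖b w‖ ≤ Mb) (hT : 1 < T) :
    ∫ t in (0 : ℝ)..T, ⟪b (windingPath x y z h T l t), windingVelocity x y z h T l t⟫_ℝ
      = windingWork b x y z h l := by
  have hint := intervalIntegrable_inner_comp hb hMb (continuous_windingPath x y z h T l)
    (stronglyMeasurable_windingVelocity x y z h T l).aestronglyMeasurable
    (norm_windingVelocity_le x y z h T l)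
  rw [← intervalIntegral.integral_add_adjacent_intervals (hint 0 (T - 1)) (hint (T - 1) T),
    windingWork]
  congr 1
  · have hsub := intervalIntegral.mul_integral_comp_mul_left (a := 0) (b := T - 1)
      (c := l / (T - 1)) (f := fun u => ⟪b (x + triangleLoop z h u), triangleVelocity z h u⟫_ℝ)
    rw [mul_zero, div_mul_cancel₀ l (by linarith : T - 1 ≠ 0)] at hsub
    rw [← hsub, ← intervalIntegral.integral_const_mul]
    refine intervalIntegral.integral_congr_Ioo_of_le (by linarith) fun s hs => ?_
    simp only [windingPath_of_mem_Icc x y z h T l (Ioo_subset_Icc_self hs), windingVelocity,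
      if_pos hs.2, real_inner_smul_right]
  · refine integral_inner_eq_segmentWork (k := 1) (by linarith) (by ring) (fun s hs => ?_)
      fun s hs => ?_
    · rw [windingPath_of_le x y z h T l hT hs.1.le, one_mul]
    · rw [windingVelocity, if_neg (not_lt.2 hs.1.le), one_smul]

theorem norm_windingPath_le [CompleteSpace E] (hT : 1 < T) {t : ℝ} (ht : t ∈ Icc 0 T) :
    ‖windingPath x y z h T l t‖ ≤ 2 * (‖x‖ + ‖y‖ + 3 * (‖z‖ + ‖h‖)) := by
  have hy := norm_nonneg y
  have hloop : ∀ u, ‖x + triangleLoop z h u‖ ≤ ‖x‖ + 3 * (‖z‖ + ‖h‖) := fun u =>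
    (norm_add_le _ _).trans (by gcongr; exact norm_triangleLoop_le z h u)
  rcases le_total t (T - 1) with hle | hge
  · rw [windingPath_of_mem_Icc x y z h T l ⟨ht.1, hle⟩]
    linarith [hloop (l / (T - 1) * t), norm_nonneg x, norm_nonneg z, norm_nonneg h]
  · rw [windingPath_of_le x y z h T l hT hge]
    have hs : ‖(t - (T - 1)) • (y - (x + triangleLoop z h l))‖
        ≤ ‖y‖ + (‖x‖ + 3 * (‖z‖ + ‖h‖)) := by
      rw [norm_smul, Real.norm_of_nonneg (by linarith)]
      exact (mul_le_of_le_one_left (norm_nonneg _) (by linarith [ht.2])).trans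
        ((norm_sub_le _ _).trans (by gcongr; exact hloop l))
    linarith [norm_add_le (x + triangleLoop z h l) ((t - (T - 1)) • (y - (x + triangleLoop z h l))),
      hloop l]

end Winding

section Paths

variable {n : ℕ}

theorem windingPath_inHT (x y z h : Euc n) (T l : ℝ) :
    InHT n T x (windingPath x y z h T l) (windingVelocity x y z h T l) := by
  have hmeas := stronglyMeasurable_windingVelocity x y z h T l
  refine ⟨by simp [windingPath], intervalIntegrable_windingVelocity x y z h T l 0 T,
    intervalIntegrable_of_norm_le (hmeas.norm.pow 2).aestronglyMeasurable
      (C := ((|l / (T - 1)| + 1) * (‖x‖ + ‖y‖ + 3 * (‖z‖ + ‖h‖))) ^ 2) (fun t => ?_) 0 T,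
    fun t _ => rfl⟩
  simp only [Pi.pow_apply, norm_pow, norm_norm]
  exact pow_le_pow_left₀ (norm_nonneg _) (norm_windingVelocity_le x y z h T l t) 2

theorem exists_bounded_admissible_paths {b : Euc n → Euc n} {Mb : ℝ} (hb : Continuous b)
    (hMb : ∀ w, ‖b w‖ ≤ Mb) (hnc : ¬∃ F : Euc n → ℝ, Differentiable ℝ F ∧ ∀ x, gradient F x = b x)
    (q : ℝ) (x y : Euc n) :
    ∃ B R : ℝ, ∀ T, 2 ≤ T → ∃ φ φ' : ℝ → Euc n, InHT n T x φ φ' ∧ φ T = y ∧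
      Diss n b T φ φ' = q ∧ ∀ t ∈ Icc 0 T, ‖φ' t‖ ≤ B ∧ ‖φ t‖ ≤ R := by
  obtain ⟨z, h, hK⟩ := exists_triangleCirculation_ne_zero hb hnc x
  set K := triangleCirculation b x z h
  set f := windingWork b x y z h
  set β := ‖x‖ + ‖y‖ + 3 * (‖z‖ + ‖h‖)
  set A := (|q| + |f 0|) / |K| + 1
  refine ⟨(A + 1) * β, 2 * β, fun T hT => ?_⟩
  obtain ⟨l, hfl, hl⟩ := exists_eq_and_abs_le_of_add_one (continuous_windingWork b x y z h hb hMb)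
    hK (windingWork_add_one b x y z h hb hMb) (q * T / 2)
  have hslope : |l / (T - 1)| ≤ A := by
    have hK0 : 0 < |K| := abs_pos.2 hK
    have hu : 0 ≤ |q| / |K| := by positivity
    have hv : 0 ≤ |f 0| / |K| + 1 := by positivity
    have hτ : (|q * T / 2| + |f 0|) / |K| = |q| / |K| * (T / 2) + |f 0| / |K| := by
      rw [abs_div, abs_mul, abs_of_nonneg (by linarith : (0 : ℝ) ≤ T), abs_two]
      ring
    rw [abs_div, abs_of_pos (by linarith : (0 : ℝ) < T - 1), div_le_iff₀ (by linarith)]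
    rw [hτ] at hl
    calc |l| ≤ |q| / |K| * (T / 2) + (|f 0| / |K| + 1) := by linarith
      _ ≤ |q| / |K| * (T - 1) + (|f 0| / |K| + 1) * (T - 1) :=
        add_le_add (by gcongr; linarith) (le_mul_of_one_le_right hv (by linarith))
      _ = A * (T - 1) := by simp only [A, add_div]; ring
  refine ⟨windingPath x y z h T l, windingVelocity x y z h T l, windingPath_inHT x y z h T l,
    windingPath_end x y z h T l (by linarith), ?_, fun t ht => ⟨?_, ?_⟩⟩
  · rw [Diss, integral_inner_windingVelocity_eq_windingWork b x y z h T l hb hMb (by linarith),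
      hfl]
    field_simp
  · exact (norm_windingVelocity_le x y z h T l t).trans (by gcongr)
  · exact norm_windingPath_le x y z h T l (by linarith) ht

theorem FW_le_of_norm_le {c : Euc n → Euc n} {T B M : ℝ} {φ φ' : ℝ → Euc n} (hT : 0 ≤ T)
    (hφ' : ∀ t ∈ Icc 0 T, ‖φ' t‖ ≤ B) (hc : ∀ t ∈ Icc 0 T, ‖c (φ t)‖ ≤ M) :
    FW n c T φ φ' ≤ (B + M) ^ 2 / 2 * T := by
  have hpt : ∀ t ∈ uIoc 0 T, ‖‖φ' t - c (φ t)‖ ^ 2‖ ≤ (B + M) ^ 2 := fun t ht => by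
    rw [uIoc_of_le hT] at ht
    rw [Real.norm_of_nonneg (by positivity)]
    exact pow_le_pow_left₀ (norm_nonneg _) ((norm_sub_le _ _).trans
      (add_le_add (hφ' t (Ioc_subset_Icc_self ht)) (hc t (Ioc_subset_Icc_self ht)))) 2
  have hint := (le_abs_self _).trans (intervalIntegral.norm_integral_le_of_norm_le_const hpt)
  rw [sub_zero, abs_of_nonneg hT] at hint
  rw [FW]
  linarith

theorem Sxy_le_FW {b c : Euc n → Euc n} {T q : ℝ} {x y : Euc n} {φ φ' : ℝ → Euc n} (hT : 0 ≤ T)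
    (hφ : InHT n T x φ φ') (hy : φ T = y) (hq : Diss n b T φ φ' = q) :
    Sxy n b c T x y q ≤ FW n c T φ φ' := by
  refine csInf_le ⟨0, ?_⟩ ⟨φ, φ', hφ, hy, hq, rfl⟩
  rintro r ⟨ψ, ψ', -, -, -, rfl⟩
  exact mul_nonneg (by norm_num) (intervalIntegral.integral_nonneg hT fun _ _ => by positivity)

end Paths

/-- there are `T₀, C ∈ (0,∞)` (depending on `q, x, y`) with
`S^{xy}_T(q) ≤ C·T` for all `T ≥ T₀`. -/
theorem statement4 (n : ℕ) (V : Euc n → ℝ) (b c : Euc n → Euc n)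
    (hA : AssumptionA n V) (hB : AssumptionB n b)
    (hc : ∀ z, c z = -(1/2 : ℝ) • gradient V z + b z)
    (q : ℝ) (x y : Euc n) :
    ∃ T₀ C : ℝ, 0 < T₀ ∧ 0 < C ∧ ∀ T, T₀ ≤ T → Sxy n b c T x y q ≤ C * T := by
  obtain ⟨hb, ⟨Mb, hMb⟩, -, hnc⟩ := hB
  have hgrad : Continuous (gradient V) := (InnerProductSpace.toDual ℝ (Euc n)).symm.continuous.comp
    (hA.1.continuous_fderiv (by norm_num))
  have hcont : Continuous c := by
    rw [funext hc]
    exact (hgrad.const_smul (-(1 / 2 : ℝ))).add hb.continuous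
  obtain ⟨B, R, hpaths⟩ := exists_bounded_admissible_paths hb.continuous hMb hnc q x y
  obtain ⟨M, hM⟩ := (isCompact_closedBall (0 : Euc n) R).exists_bound_of_continuousOn
    hcont.continuousOn
  refine ⟨2, (B + M) ^ 2 / 2 + 1, two_pos, by positivity, fun T hT => ?_⟩
  obtain ⟨φ, φ', hφ, hy, hq, hbd⟩ := hpaths T hT
  calc Sxy n b c T x y q ≤ FW n c T φ φ' := Sxy_le_FW (by linarith) hφ hy hq
    _ ≤ (B + M) ^ 2 / 2 * T := FW_le_of_norm_le (by linarith) (fun t ht => (hbd t ht).1)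
        fun t ht => hM _ (mem_closedBall_zero_iff.2 (hbd t ht).2)
    _ ≤ ((B + M) ^ 2 / 2 + 1) * T := by nlinarith
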